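/- Assume the family {f_t}_t is Newton-admissible and the point (τ,q) is sufficiently close to the origin, and let ω₁,…,ω_{k_{L'}}, ν₁ ≤ ⋯ ≤ ν_{k_{L'}} ≤ d − w_min be as produced by the renumbering and polynomials c_{k,l}(s) with df^k(ρ(s)) + Σ_{l<k} c_{k,l}(s) df^l(ρ(s)) = ω_k s^{ν_k} + (higher-order terms), ω_k ≠ 0. Then for every 1 ≤ k ≤ k_{L'} the linear form ω_k vanishes identically on ℂ × ℂ^I ⊆ ℂ × ℂⁿ (its dt-component and its dz_i-components for i ∈ I are zero); consequently, for 1 ≤ k ≤ k_{L'}, every limit as s → 0 of the tangent hyperplanes ker df^k(ρ(s)) (in the sense of convergence of the associated orthogonal projections) contains ℂ × ℂ^I. -/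

import Mathlib

/-!
Put `V := (0, w)`, the weight on `ℂ × ℂⁿ` that ignores `t`. Since the Newton boundary of
`f^k_t` does not depend on `t`, every monomial of `f^k` has `V`-weight at least `d`. As
`t(s) → τ`, the path `ρ` has leading terms `(τ, a₁, …, aₙ)` with `V`-exponents, so
`s^(-D) h(ρ(s))` tends to the value at these leading coefficients of the `V`-homogeneous component
of degree `D` of `h`, whenever all monomials of `h` have `V`-weight at least `D`.

The derivatives of `f^k` in the directions of `ℂ × ℂ^I` (weight `0`) are therefore `o(s^D)` for
every `D < d`, and `ν_k ≤ d - w_min < d` forces `ω_k` to vanish on `ℂ × ℂ^I`. For the tangent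
hyperplanes, `f^k(ρ(s)) = 0` makes the face function `(f^k_τ)_w` vanish at `a`, local tameness
gives `i₀ ∉ I` with `∂(f^k_τ)_w/∂z_{i₀}(a) ≠ 0`, and then `∂f^k/∂z_{i₀}(ρ(s))` is of exact order
`s^(d - w_{i₀})`, dominating the components along `ℂ × ℂ^I`: every vector of `ℂ × ℂ^I` is at
distance `o(1)` from `ker df^k(ρ(s))`.
-/

open MvPolynomial Filter Topology Set

noncomputable section

namespace NewtonPaper

/-- A point of a finite-dimensional Euclidean space viewed as a plain function. -/
def pt {m : ℕ} (p : EuclideanSpace ℂ (Fin m)) : Fin m → ℂ := p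

/-- `d(w;g)`: the minimal value of `∑ i, w i * α i` over the support of `g`. -/
def dmin {n : ℕ} (w : Fin n → ℕ) (g : MvPolynomial (Fin n) ℂ) : ℕ :=
  sInf {m : ℕ | ∃ α ∈ g.support, (∑ i, w i * α i) = m}

/-- The face function `g_w` of `g` with respect to the weight vector `w`. -/
def facePoly {n : ℕ} (w : Fin n → ℕ) (g : MvPolynomial (Fin n) ℂ) : MvPolynomial (Fin n) ℂ :=
  ∑ α ∈ g.support.filter (fun α => (∑ i, w i * α i) = dmin w g), monomial α (coeff α g)

/-- The Newton polyhedron `Γ₊(g)`. -/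
def NewtonPolyhedron {n : ℕ} (g : MvPolynomial (Fin n) ℂ) : Set (Fin n → ℝ) :=
  convexHull ℝ (⋃ α ∈ g.support, {x : Fin n → ℝ | ∀ i, (α i : ℝ) ≤ x i})

/-- The Newton boundary `Γ(g)`: the union of the compact faces of `Γ₊(g)`, i.e. of the
faces of `Γ₊(g)` supported by strictly positive linear functionals. -/
def NewtonBoundary {n : ℕ} (g : MvPolynomial (Fin n) ℂ) : Set (Fin n → ℝ) :=
  ⋃ w ∈ {w : Fin n → ℝ | ∀ i, 0 < w i},
    {x ∈ NewtonPolyhedron g |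
      ∀ y ∈ NewtonPolyhedron g, (∑ i, w i * x i) ≤ ∑ i, w i * y i}

/-- `g` vanishes identically on the coordinate subspace `ℂ^I`. -/
def VanishesOn {n : ℕ} (g : MvPolynomial (Fin n) ℂ) (I : Set (Fin n)) : Prop :=
  ∀ z : Fin n → ℂ, (∀ i, i ∉ I → z i = 0) → eval z g = 0

/-- `g 0, …, g (p-1)` define a (Newton) non-degenerate complete intersection germ at `0`. -/
def IsNondegCI {n p : ℕ} (g : Fin p → MvPolynomial (Fin n) ℂ) : Prop :=
  ∀ w : Fin n → ℕ, (∀ i, 0 < w i) →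
    ∀ z : Fin n → ℂ, (∀ i, z i ≠ 0) → (∀ j, eval z (facePoly w (g j)) = 0) →
      LinearIndependent ℂ fun j => fun i => eval z (pderiv i (facePoly w (g j)))

/-- `R` is a radius of local tameness of the set of functions `{g 0, …, g (p-1)}`. -/
def IsTameRadius {n p : ℕ} (R : ℝ) (g : Fin p → MvPolynomial (Fin n) ℂ) : Prop :=
  ∀ I : Finset (Fin n), I.Nonempty → (∀ j, VanishesOn (g j) ↑I) →
    ∀ w : Fin n → ℕ, w ≠ 0 → (∀ i, w i = 0 ↔ i ∈ I) →
      ∀ z : Fin n → ℂ, (∀ i, z i ≠ 0) → (∑ i ∈ I, ‖z i‖ ^ 2) < R →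
        (∀ j, eval z (facePoly w (g j)) = 0) →
        LinearIndependent ℂ fun j => fun i : {i : Fin n // i ∉ I} =>
          eval z (pderiv i.1 (facePoly w (g j)))

/-- The specialisation `f_t` of a polynomial `P` on `ℂ × ℂⁿ` (variable `0` is `t`). -/
def specialize {n : ℕ} (t : ℂ) (P : MvPolynomial (Fin (n + 1)) ℂ) : MvPolynomial (Fin n) ℂ :=
  aeval (Fin.cases (C t) fun i => X i) P

/-- The family `{f_t}`, where `f = (F 0) ⋯ (F (k₀-1))`, is Newton-admissible. -/
def NewtonAdmissible {n k₀ : ℕ} (F : Fin k₀ → MvPolynomial (Fin (n + 1)) ℂ) : Prop :=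
  ∃ R > (0 : ℝ), ∃ τ > (0 : ℝ), ∀ t : ℂ, ‖t‖ < τ →
    (∀ k, NewtonBoundary (specialize t (F k)) = NewtonBoundary (specialize 0 (F k))) ∧
    ∀ (p : ℕ) (κ : Fin p → Fin k₀), Function.Injective κ →
      IsNondegCI (fun j => specialize t (F (κ j))) ∧
      ∃ R' > R, IsTameRadius R' fun j => specialize t (F (κ j))

/-- The stratum `S^I(K)` of the canonical toric stratification of `V(f) ⊆ ℂ × ℂⁿ`. -/
def stratum {n k₀ : ℕ} (F : Fin k₀ → MvPolynomial (Fin (n + 1)) ℂ)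
    (I : Set (Fin n)) (K : Set (Fin k₀)) : Set (EuclideanSpace ℂ (Fin (n + 1))) :=
  {p | (∀ i : Fin n, pt p i.succ ≠ 0 ↔ i ∈ I) ∧ ∀ k, eval (pt p) (F k) = 0 ↔ k ∈ K}

/-- The slice `S^I_t(K)` of `S^I(K)`, viewed in `ℂⁿ`. -/
def stratumT {n k₀ : ℕ} (F : Fin k₀ → MvPolynomial (Fin (n + 1)) ℂ) (t : ℂ)
    (I : Set (Fin n)) (K : Set (Fin k₀)) : Set (EuclideanSpace ℂ (Fin n)) :=
  {z | (∀ i : Fin n, pt z i ≠ 0 ↔ i ∈ I) ∧ ∀ k, eval (pt z) (specialize t (F k)) = 0 ↔ k ∈ K}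

/-- Orthogonal projection onto a subspace, as an endomorphism. -/
def projOf {m : ℕ} (T : Submodule ℂ (EuclideanSpace ℂ (Fin m))) :
    EuclideanSpace ℂ (Fin m) →L[ℂ] EuclideanSpace ℂ (Fin m) :=
  T.subtypeL.comp (T.orthogonalProjectionOnto)

/-- Tangent space of a set at a point (the ℂ-span of the tangent cone; for a
non-singular complex submanifold this is the usual tangent space). -/
def tangentSpaceAt {m : ℕ} (S : Set (EuclideanSpace ℂ (Fin m)))
    (p : EuclideanSpace ℂ (Fin m)) : Submodule ℂ (EuclideanSpace ℂ (Fin m)) :=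
  Submodule.span ℂ (tangentConeAt ℂ S p)

/-- Convergence of subspaces in the sense of convergence of orthogonal projections. -/
def TendstoSubspaces {α : Type*} {m : ℕ} (l : Filter α)
    (T : α → Submodule ℂ (EuclideanSpace ℂ (Fin m)))
    (T' : Submodule ℂ (EuclideanSpace ℂ (Fin m))) : Prop :=
  Tendsto (fun x => projOf (T x)) l (𝓝 (projOf T'))

/-- Whitney's condition (b) for the pair `(S', S)`. -/
def WhitneyB {m : ℕ} (S' S : Set (EuclideanSpace ℂ (Fin m))) : Prop :=
  ∀ q ∈ S' ∩ closure S, ∀ pm qm : ℕ → EuclideanSpace ℂ (Fin m),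
    ∀ T : Submodule ℂ (EuclideanSpace ℂ (Fin m)), ∀ u : EuclideanSpace ℂ (Fin m),
      (∀ j, pm j ∈ S) → (∀ j, qm j ∈ S') → (∀ j, pm j ≠ qm j) →
      Tendsto pm atTop (𝓝 q) → Tendsto qm atTop (𝓝 q) →
      TendstoSubspaces atTop (fun j => tangentSpaceAt S (pm j)) T →
      Tendsto (fun j => (‖pm j - qm j‖ : ℝ)⁻¹ • (pm j - qm j)) atTop (𝓝 u) →
      u ∈ T

/-- `S` is, near `p ∈ S`, a non-singular (complex) locally closed submanifold. -/
def IsNonsingularAt {m : ℕ} (S : Set (EuclideanSpace ℂ (Fin m)))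
    (p : EuclideanSpace ℂ (Fin m)) : Prop :=
  ∃ (k : ℕ) (U : Set (EuclideanSpace ℂ (Fin m)))
    (g : EuclideanSpace ℂ (Fin m) → EuclideanSpace ℂ (Fin k)),
    IsOpen U ∧ p ∈ U ∧ Differentiable ℂ g ∧ S ∩ U = {x ∈ U | g x = 0} ∧
      Function.Surjective (fderiv ℂ g p)

/-- Whitney (b)-regular stratification of `V`. -/
def IsWhitneyStratification {m : ℕ} (V : Set (EuclideanSpace ℂ (Fin m)))
    (𝒮 : Set (Set (EuclideanSpace ℂ (Fin m)))) : Prop :=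
  ⋃₀ 𝒮 = V ∧
  (∀ S ∈ 𝒮, ∀ S' ∈ 𝒮, S ≠ S' → Disjoint S S') ∧
  (∀ S ∈ 𝒮, ∀ p ∈ S, IsNonsingularAt S p) ∧
  (∀ S ∈ 𝒮, ∀ S' ∈ 𝒮, S ≠ S' → WhitneyB S' S)

/-- The coefficient vector of the complex differential of `P` at `p`. -/
def dvec {m : ℕ} (P : MvPolynomial (Fin m) ℂ) (p : EuclideanSpace ℂ (Fin m)) :
    Fin m → ℂ := fun j => eval (pt p) (pderiv j P)

/-- The kernel of the complex differential of `P` at `p`. -/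
def dKer {m : ℕ} (P : MvPolynomial (Fin m) ℂ) (p : EuclideanSpace ℂ (Fin m)) :
    Submodule ℂ (EuclideanSpace ℂ (Fin m)) :=
  LinearMap.ker
    ((∑ j, dvec P p j • (EuclideanSpace.proj j : EuclideanSpace ℂ (Fin m) →L[ℂ] ℂ) :
      EuclideanSpace ℂ (Fin m) →L[ℂ] ℂ) : EuclideanSpace ℂ (Fin m) →ₗ[ℂ] ℂ)

/-- The subspace `ℂ × ℂ^I ⊆ ℂ × ℂⁿ`, where `I = {i | (i : ℕ) < nI}`. -/
def axisCI (n nI : ℕ) : Submodule ℂ (EuclideanSpace ℂ (Fin (n + 1))) :=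
  ⨅ i ∈ {i : Fin n | nI ≤ (i : ℕ)},
    LinearMap.ker ((EuclideanSpace.proj i.succ : EuclideanSpace ℂ (Fin (n + 1)) →L[ℂ] ℂ) :
      EuclideanSpace ℂ (Fin (n + 1)) →ₗ[ℂ] ℂ)

/-- Thom's `a_f` condition for a stratification `𝒮`, with `V(f) = {f = 0}`. -/
def ThomAf {m : ℕ} (P : MvPolynomial (Fin m) ℂ)
    (𝒮 : Set (Set (EuclideanSpace ℂ (Fin m)))) : Prop :=
  ∀ S ∈ 𝒮, ∀ q ∈ S, ∀ pm : ℕ → EuclideanSpace ℂ (Fin m),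
    ∀ T : Submodule ℂ (EuclideanSpace ℂ (Fin m)),
      (∀ j, eval (pt (pm j)) P ≠ 0) → (∀ j, dvec P (pm j) ≠ 0) →
      Tendsto pm atTop (𝓝 q) →
      TendstoSubspaces atTop (fun j => dKer P (pm j)) T →
      tangentSpaceAt S q ≤ T

/-- Inclusion `Fin m → Fin k₀` given `m ≤ k₀`. -/
def castIdx {k₀ m : ℕ} (h : m ≤ k₀) (k : Fin m) : Fin k₀ :=
  ⟨k, lt_of_lt_of_le k.isLt h⟩

open Finsupp (weight)

section Weight

variable {σ : Type*}

theorem weight_eq_sum_mul [Fintype σ] (w : σ → ℕ) (α : σ →₀ ℕ) :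
    weight w α = ∑ i, w i * α i := by
  rw [Finsupp.weight_apply, Finsupp.sum_fintype _ _ fun _ => zero_smul ℕ (w _)]
  simp only [smul_eq_mul, mul_comm]

theorem weight_add_single [DecidableEq σ] (w : σ → ℕ) (α : σ →₀ ℕ) (j : σ) :
    weight w (α + Finsupp.single j 1) = weight w α + w j := by
  simp [Finsupp.weight_single]

theorem weightedHomogeneousComponent_pderiv [DecidableEq σ] (w : σ → ℕ) (D : ℕ) (j : σ)
    (P : MvPolynomial σ ℂ) :
    weightedHomogeneousComponent w D (pderiv j P) =
      pderiv j (weightedHomogeneousComponent w (D + w j) P) := by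
  ext α
  simp only [coeff_weightedHomogeneousComponent, coeff_pderiv, weight_add_single,
    add_left_inj]
  split_ifs <;> simp

theorem pderiv_weightedHomogeneousComponent_eq_zero [DecidableEq σ] {w : σ → ℕ} {D : ℕ}
    {j : σ} (h : D < w j) (P : MvPolynomial σ ℂ) :
    pderiv j (weightedHomogeneousComponent w D P) = 0 := by
  ext α
  rw [coeff_pderiv, coeff_weightedHomogeneousComponent, weight_add_single,
    if_neg (by omega), zero_mul, coeff_zero]

theorem le_weight_add_of_mem_support_pderiv [DecidableEq σ] {w : σ → ℕ} {d : ℕ}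
    {P : MvPolynomial σ ℂ} (hP : ∀ β ∈ P.support, d ≤ weight w β) {j : σ} {α : σ →₀ ℕ}
    (hα : α ∈ (pderiv j P).support) : d ≤ weight w α + w j := by
  rw [mem_support_iff, coeff_pderiv] at hα
  rw [← weight_add_single]
  exact hP _ (mem_support_iff.mpr (left_ne_zero_of_mul hα))

end Weight

/-- `x s = a s ^ W + (higher order terms)` coordinatewise, as `s → 0⁺`; the leading
coefficients `a j` are allowed to vanish. -/
def HasLeadingTerms {σ : Type*} (x : ℝ → σ → ℂ) (W : σ → ℕ) (a : σ → ℂ) : Prop :=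
  ∀ j, Tendsto (fun s : ℝ => ((s : ℂ) ^ W j)⁻¹ * x s j) (𝓝[>] 0) (𝓝 (a j))

namespace HasLeadingTerms

variable {σ : Type*} [Fintype σ] {x : ℝ → σ → ℂ} {W : σ → ℕ} {a : σ → ℂ}

theorem tendsto_monomial (hx : HasLeadingTerms x W a) (β : σ →₀ ℕ) {D : ℕ}
    (hD : D ≤ weight W β) :
    Tendsto (fun s : ℝ => ((s : ℂ) ^ D)⁻¹ * ∏ j, x s j ^ β j) (𝓝[>] 0)
      (𝓝 (if weight W β = D then ∏ j, a j ^ β j else 0)) := by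
  obtain ⟨e, he⟩ := Nat.exists_eq_add_of_le hD
  have hpow : Tendsto (fun s : ℝ => (s : ℂ) ^ e) (𝓝[>] 0) (𝓝 ((0 : ℂ) ^ e)) :=
    ((Complex.continuous_ofReal.pow e).tendsto' 0 _ (by simp)).mono_left nhdsWithin_le_nhds
  have hlim := hpow.mul (tendsto_finsetProd Finset.univ fun j _ => (hx j).pow (β j))
  have hval : (0 : ℂ) ^ e * ∏ j, a j ^ β j = if weight W β = D then ∏ j, a j ^ β j else 0 := by
    rcases Nat.eq_zero_or_pos e with rfl | he0
    · simp [he]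
    · simp [zero_pow he0.ne', he, he0.ne']
  rw [← hval]
  refine hlim.congr' (eventually_nhdsWithin_of_forall fun s (hs : 0 < s) => ?_)
  have hs : (s : ℂ) ≠ 0 := Complex.ofReal_ne_zero.mpr hs.ne'
  rw [weight_eq_sum_mul] at he
  simp only [mul_pow, Finset.prod_mul_distrib, inv_pow, ← pow_mul, Finset.prod_inv_distrib,
    Finset.prod_pow_eq_pow_sum, he, pow_add]
  field_simp

theorem tendsto_eval (hx : HasLeadingTerms x W a) {P : MvPolynomial σ ℂ} {D : ℕ}
    (hP : ∀ β ∈ P.support, D ≤ weight W β) :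
    Tendsto (fun s : ℝ => ((s : ℂ) ^ D)⁻¹ * eval (x s) P) (𝓝[>] 0)
      (𝓝 (eval a (weightedHomogeneousComponent W D P))) := by
  have hval : eval a (weightedHomogeneousComponent W D P) =
      ∑ β ∈ P.support, coeff β P * if weight W β = D then ∏ j, a j ^ β j else 0 := by
    simp only [eval_eq' a, support_weightedHomogeneousComponent,
      coeff_weightedHomogeneousComponent, Finset.sum_filter]
    exact Finset.sum_congr rfl fun β _ => by split_ifs <;> simp
  rw [hval]
  refine (tendsto_finsetSum P.support fun β hβ =>
    (hx.tendsto_monomial β (hP β hβ)).const_mul (coeff β P)).congr fun s => ?_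
  rw [eval_eq', Finset.mul_sum]
  exact Finset.sum_congr rfl fun β _ => by ring

theorem tendsto_eval_pderiv [DecidableEq σ] (hx : HasLeadingTerms x W a)
    {P : MvPolynomial σ ℂ} {D : ℕ} (j : σ) (hP : ∀ β ∈ P.support, D + W j ≤ weight W β) :
    Tendsto (fun s : ℝ => ((s : ℂ) ^ D)⁻¹ * eval (x s) (pderiv j P)) (𝓝[>] 0)
      (𝓝 (eval a (pderiv j (weightedHomogeneousComponent W (D + W j) P)))) := by
  rw [← weightedHomogeneousComponent_pderiv]
  exact hx.tendsto_eval fun α hα => by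
    have := le_weight_add_of_mem_support_pderiv hP hα
    omega

theorem tendsto_eval_pderiv_of_weight_eq_zero [DecidableEq σ] (hx : HasLeadingTerms x W a)
    {P : MvPolynomial σ ℂ} {d D : ℕ} (hP : ∀ β ∈ P.support, d ≤ weight W β) (hD : D < d)
    {j : σ} (hj : W j = 0) :
    Tendsto (fun s : ℝ => ((s : ℂ) ^ D)⁻¹ * eval (x s) (pderiv j P)) (𝓝[>] 0) (𝓝 0) := by
  have hP' : ∀ β ∈ P.support, D + W j ≤ weight W β := fun β hβ => by
    have := hP β hβ
    omega
  have hzero : weightedHomogeneousComponent W (D + W j) P = 0 :=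
    weightedHomogeneousComponent_eq_zero' _ _ fun β hβ => by
      have := hP β hβ
      omega
  simpa [hzero] using hx.tendsto_eval_pderiv j hP'

end HasLeadingTerms

section Specialize

variable {n : ℕ}

theorem eval_specialize (t : ℂ) (z : Fin n → ℂ) (P : MvPolynomial (Fin (n + 1)) ℂ) :
    eval z (specialize t P) = eval (Fin.cons t z : Fin (n + 1) → ℂ) P := by
  rw [specialize, aeval_eq_bind₁, eval, eval₂Hom_bind₁, eval]
  congr 2
  funext i
  refine Fin.cases ?_ (fun i => ?_) i <;> simp

theorem specialize_monomial (t : ℂ) (β : Fin (n + 1) →₀ ℕ) (c : ℂ) :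
    specialize t (monomial β c) = monomial β.tail (c * t ^ β 0) := by
  rw [specialize, aeval_monomial, Finsupp.prod_fintype _ _ fun _ => pow_zero _,
    Fin.prod_univ_succ, monomial_eq, Finsupp.prod_fintype _ _ fun _ => pow_zero _]
  simp [mul_assoc, Finsupp.tail_apply]

theorem specialize_eq_eval_finSuccEquiv (t : ℂ) (P : MvPolynomial (Fin (n + 1)) ℂ) :
    specialize t P = (finSuccEquiv ℂ n P).eval (C t) := by
  induction P using MvPolynomial.induction_on with
  | C c => simp [specialize, finSuccEquiv_apply]
  | add p q hp hq =>
    simp only [specialize, map_add, Polynomial.eval_add] at hp hq ⊢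
    rw [hp, hq]
  | mul_X p i hp =>
    simp only [specialize, map_mul, Polynomial.eval_mul] at hp ⊢
    rw [hp]
    refine Fin.cases ?_ (fun i => ?_) i <;> simp [finSuccEquiv_X_zero, finSuccEquiv_X_succ]

theorem eq_zero_of_specialize_eq_zero {S : Set ℂ} (hS : S.Infinite)
    {P : MvPolynomial (Fin (n + 1)) ℂ} (h : ∀ t ∈ S, specialize t P = 0) : P = 0 := by
  suffices finSuccEquiv ℂ n P = 0 by simpa using this
  refine Polynomial.eq_zero_of_infinite_isRoot _
    ((hS.image (C_injective (Fin n) ℂ).injOn).mono ?_)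
  rintro _ ⟨t, ht, rfl⟩
  simpa [Polynomial.IsRoot, specialize_eq_eval_finSuccEquiv] using h t ht

theorem weight_cons_zero (w : Fin n → ℕ) (β : Fin (n + 1) →₀ ℕ) :
    weight (Fin.cons 0 w : Fin (n + 1) → ℕ) β = weight w β.tail := by
  simp [weight_eq_sum_mul, Fin.sum_univ_succ, Finsupp.tail_apply]

theorem specialize_weightedHomogeneousComponent (t : ℂ) (w : Fin n → ℕ) (D : ℕ)
    (P : MvPolynomial (Fin (n + 1)) ℂ) :
    specialize t (weightedHomogeneousComponent (Fin.cons 0 w) D P) =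
      weightedHomogeneousComponent w D (specialize t P) := by
  induction P using MvPolynomial.induction_on' with
  | add p q hp hq =>
    simp only [specialize, map_add] at hp hq ⊢
    rw [hp, hq]
  | monomial β c =>
    rw [weightedHomogeneousComponent_of_mem (isWeightedHomogeneous_monomial _ _ _ rfl),
      specialize_monomial, weightedHomogeneousComponent_of_mem
        (isWeightedHomogeneous_monomial _ _ _ rfl), weight_cons_zero]
    split_ifs
    exacts [specialize_monomial t β c, map_zero _]

theorem specialize_pderiv_succ (t : ℂ) (i : Fin n) (P : MvPolynomial (Fin (n + 1)) ℂ) :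
    specialize t (pderiv i.succ P) = pderiv i (specialize t P) := by
  induction P using MvPolynomial.induction_on' with
  | add p q hp hq =>
    simp only [specialize, map_add] at hp hq ⊢
    rw [hp, hq]
  | monomial β c =>
    have htail : (β - Finsupp.single i.succ 1).tail = β.tail - Finsupp.single i 1 := by
      ext k
      simp [Finsupp.tail_apply, Finsupp.single_apply, Fin.succ_inj]
    simp only [pderiv_monomial, specialize_monomial, htail, Finsupp.tail_apply]
    congr 1
    simp [Fin.succ_ne_zero]
    ring

end Specialize

section NewtonBoundary

variable {n : ℕ} {g g₁ g₂ : MvPolynomial (Fin n) ℂ}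

theorem facePoly_eq_weightedHomogeneousComponent (w : Fin n → ℕ) (g : MvPolynomial (Fin n) ℂ) :
    facePoly w g = weightedHomogeneousComponent w (dmin w g) g := by
  simp only [facePoly, weightedHomogeneousComponent_apply, weight_eq_sum_mul]

theorem dmin_le_weight (w : Fin n → ℕ) {α : Fin n →₀ ℕ} (hα : α ∈ g.support) :
    dmin w g ≤ weight w α :=
  Nat.sInf_le ⟨α, hα, (weight_eq_sum_mul w α).symm⟩

theorem exists_weight_eq_dmin (hg : g.support.Nonempty) (w : Fin n → ℕ) :
    ∃ α ∈ g.support, weight w α = dmin w g := by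
  obtain ⟨α, hα⟩ := hg
  obtain ⟨α, hα, h⟩ :=
    Nat.sInf_mem (s := {m | ∃ α ∈ g.support, ∑ i, w i * α i = m}) ⟨_, α, hα, rfl⟩
  exact ⟨α, hα, (weight_eq_sum_mul w α).trans h⟩

theorem dmin_eq_zero_of_support_eq_empty (hg : g.support = ∅) (w : Fin n → ℕ) :
    dmin w g = 0 := by
  simp [dmin, hg]

theorem le_sum_mul_of_mem_newtonPolyhedron {w : Fin n → ℝ} (hw : ∀ i, 0 ≤ w i) {m : ℝ}
    (hm : ∀ α ∈ g.support, m ≤ ∑ i, w i * α i) {x : Fin n → ℝ}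
    (hx : x ∈ NewtonPolyhedron g) : m ≤ ∑ i, w i * x i := by
  have hlin : IsLinearMap ℝ fun x : Fin n → ℝ => ∑ i, w i * x i :=
    ⟨fun x y => by simp [mul_add, Finset.sum_add_distrib],
      fun c x => by simp [Finset.mul_sum, mul_left_comm]⟩
  refine convexHull_min ?_ (convex_halfSpace_ge hlin m) hx
  simp only [Set.iUnion_subset_iff]
  intro α hα x hx
  exact (hm α hα).trans (Finset.sum_le_sum fun i _ => mul_le_mul_of_nonneg_left (hx i) (hw i))

theorem support_nonempty_of_mem_newtonPolyhedron {x : Fin n → ℝ}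
    (hx : x ∈ NewtonPolyhedron g) : g.support.Nonempty := by
  by_contra h
  simp [NewtonPolyhedron, Finset.not_nonempty_iff_eq_empty.mp h] at hx

theorem cast_mem_newtonBoundary {w : Fin n → ℝ} (hw : ∀ i, 0 < w i) {α : Fin n →₀ ℕ}
    (hα : α ∈ g.support) (hmin : ∀ α' ∈ g.support, ∑ i, w i * α i ≤ ∑ i, w i * α' i) :
    (fun i => (α i : ℝ)) ∈ NewtonBoundary g := by
  simp only [NewtonBoundary, Set.mem_iUnion, Set.mem_ofPred_eq]
  exact ⟨w, hw, subset_convexHull ℝ _ (Set.mem_biUnion hα fun _ => le_rfl),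
    fun y hy => le_sum_mul_of_mem_newtonPolyhedron (fun i => (hw i).le) hmin hy⟩

/-- `w` may have zero entries, so the face on which it is minimal need not be compact; but a
minimiser of the strictly positive weight `(B + 1) • w + 1`, where `B` bounds the degrees of the
monomials, still minimises `w`. -/
theorem exists_mem_newtonBoundary_weight_eq_dmin (hg : g.support.Nonempty) (w : Fin n → ℕ) :
    ∃ α ∈ g.support, weight w α = dmin w g ∧ (fun i => (α i : ℝ)) ∈ NewtonBoundary g := by
  set B := g.totalDegree
  set w' : Fin n → ℕ := fun i => (B + 1) * w i + 1
  have hw' : ∀ α : Fin n →₀ ℕ, ∑ i, w' i * α i = (B + 1) * weight w α + ∑ i, α i := by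
    intro α
    simp [w', weight_eq_sum_mul, add_mul, Finset.sum_add_distrib, Finset.mul_sum, mul_assoc]
  have hdeg : ∀ α ∈ g.support, ∑ i, α i ≤ B := fun α hα => by
    simpa [Finsupp.sum_fintype] using le_totalDegree hα
  obtain ⟨α, hα, hmin⟩ := Finset.exists_min_image g.support (fun α => ∑ i, w' i * α i) hg
  obtain ⟨α₀, hα₀, hα₀d⟩ := exists_weight_eq_dmin hg w
  refine ⟨α, hα, le_antisymm ?_ (dmin_le_weight w hα), cast_mem_newtonBoundary
    (w := fun i => (w' i : ℝ)) (fun i => by positivity) hα fun α' hα' => ?_⟩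
  · have h := hmin α₀ hα₀
    rw [hw', hw', hα₀d] at h
    have := hdeg α₀ hα₀
    have : (B + 1) * weight w α < (B + 1) * (dmin w g + 1) := by
      linarith [Nat.zero_le (∑ i, α i)]
    exact Nat.le_of_lt_succ (Nat.lt_of_mul_lt_mul_left this)
  · exact_mod_cast hmin α' hα'

theorem dmin_le_of_mem_newtonBoundary (w : Fin n → ℕ) {y : Fin n → ℝ}
    (hy : y ∈ NewtonBoundary g) : (dmin w g : ℝ) ≤ ∑ i, w i * y i := by
  simp only [NewtonBoundary, Set.mem_iUnion, Set.mem_ofPred_eq] at hy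
  obtain ⟨-, -, hy, -⟩ := hy
  refine le_sum_mul_of_mem_newtonPolyhedron (fun i => by positivity) (fun α hα => ?_) hy
  exact_mod_cast (dmin_le_weight w hα).trans_eq (weight_eq_sum_mul w α)

theorem newtonBoundary_nonempty_iff : (NewtonBoundary g).Nonempty ↔ g.support.Nonempty := by
  refine ⟨fun ⟨y, hy⟩ => ?_, fun hg => ?_⟩
  · simp only [NewtonBoundary, Set.mem_iUnion, Set.mem_ofPred_eq] at hy
    obtain ⟨-, -, hy, -⟩ := hy
    exact support_nonempty_of_mem_newtonPolyhedron hy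
  · obtain ⟨α, -, -, hα⟩ := exists_mem_newtonBoundary_weight_eq_dmin hg 0
    exact ⟨_, hα⟩

theorem dmin_le_of_newtonBoundary_subset (w : Fin n → ℕ) (h : NewtonBoundary g₁ ⊆ NewtonBoundary g₂)
    (hg₁ : g₁.support.Nonempty) : dmin w g₂ ≤ dmin w g₁ := by
  obtain ⟨α, -, hαd, hα⟩ := exists_mem_newtonBoundary_weight_eq_dmin hg₁ w
  have := dmin_le_of_mem_newtonBoundary w (h hα)
  rw [← hαd, weight_eq_sum_mul]
  exact_mod_cast this

theorem dmin_eq_of_newtonBoundary_eq (h : NewtonBoundary g₁ = NewtonBoundary g₂)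
    (w : Fin n → ℕ) : dmin w g₁ = dmin w g₂ := by
  have hiff : g₁.support.Nonempty ↔ g₂.support.Nonempty := by
    rw [← newtonBoundary_nonempty_iff, h, newtonBoundary_nonempty_iff]
  rcases g₁.support.eq_empty_or_nonempty with h₁ | h₁
  · have h₂ : g₂.support = ∅ := by
      rwa [← Finset.not_nonempty_iff_eq_empty, ← hiff, Finset.not_nonempty_iff_eq_empty]
    rw [dmin_eq_zero_of_support_eq_empty h₁, dmin_eq_zero_of_support_eq_empty h₂]
  · exact le_antisymm (dmin_le_of_newtonBoundary_subset w h.ge (hiff.mp h₁))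
      (dmin_le_of_newtonBoundary_subset w h.le h₁)

end NewtonBoundary

section LeadingTerms

variable {n : ℕ} {P : MvPolynomial (Fin (n + 1)) ℂ} {w : Fin n → ℕ}

theorem HasLeadingTerms.cons_zero {x : ℝ → Fin (n + 1) → ℂ} {W : Fin (n + 1) → ℕ}
    {a : Fin (n + 1) → ℂ} (hx : HasLeadingTerms x W a) {τ : ℂ}
    (h0 : Tendsto (fun s => x s 0) (𝓝[>] 0) (𝓝 τ)) :
    HasLeadingTerms x (Fin.cons 0 fun i => W i.succ) (Fin.cons τ fun i => a i.succ) := by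
  intro j
  refine Fin.cases ?_ (fun i => ?_) j
  · simpa using h0
  · simpa using hx i.succ

/-- `Fin.cons 0 w` is the weight of the `z`-variables. A monomial of `P` of smaller weight would
give a nonzero weighted homogeneous component of `P` all of whose specialisations at small `t`
vanish. -/
theorem dmin_specialize_zero_le_weight {r : ℝ} (hr : 0 < r)
    (hP : ∀ t : ℂ, ‖t‖ < r → NewtonBoundary (specialize t P) = NewtonBoundary (specialize 0 P))
    (w : Fin n → ℕ) {β : Fin (n + 1) →₀ ℕ} (hβ : β ∈ P.support) :
    dmin w (specialize 0 P) ≤ weight (Fin.cons 0 w : Fin (n + 1) → ℕ) β := by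
  by_contra! hlt
  have hzero : weightedHomogeneousComponent (Fin.cons 0 w)
      (weight (Fin.cons 0 w : Fin (n + 1) → ℕ) β) P = 0 := by
    refine eq_zero_of_specialize_eq_zero (infinite_of_mem_nhds (0 : ℂ) (Metric.ball_mem_nhds 0 hr))
      fun t ht => ?_
    rw [specialize_weightedHomogeneousComponent]
    refine weightedHomogeneousComponent_eq_zero' _ _ fun α hα => ?_
    have := dmin_le_weight w hα
    rw [dmin_eq_of_newtonBoundary_eq (hP t (by simpa using ht))] at this
    omega
  have := congrArg (coeff β) hzero
  rw [coeff_weightedHomogeneousComponent, if_pos rfl, coeff_zero] at this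
  exact mem_support_iff.mp hβ this

namespace HasLeadingTerms

variable {x : ℝ → Fin (n + 1) → ℂ} {τ : ℂ} {b : Fin n → ℂ} {d : ℕ}

theorem tendsto_eval_facePoly (hx : HasLeadingTerms x (Fin.cons 0 w) (Fin.cons τ b))
    (hP : ∀ β ∈ P.support, d ≤ weight (Fin.cons 0 w : Fin (n + 1) → ℕ) β)
    (hd : dmin w (specialize τ P) = d) :
    Tendsto (fun s : ℝ => ((s : ℂ) ^ d)⁻¹ * eval (x s) P) (𝓝[>] 0)
      (𝓝 (eval b (facePoly w (specialize τ P)))) := by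
  rw [facePoly_eq_weightedHomogeneousComponent, hd, ← specialize_weightedHomogeneousComponent,
    eval_specialize]
  exact hx.tendsto_eval hP

theorem tendsto_eval_pderiv_facePoly (hx : HasLeadingTerms x (Fin.cons 0 w) (Fin.cons τ b))
    (hP : ∀ β ∈ P.support, d ≤ weight (Fin.cons 0 w : Fin (n + 1) → ℕ) β)
    (hd : dmin w (specialize τ P) = d) {i : Fin n} {D : ℕ} (hD : D + w i = d) :
    Tendsto (fun s : ℝ => ((s : ℂ) ^ D)⁻¹ * eval (x s) (pderiv i.succ P)) (𝓝[>] 0)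
      (𝓝 (eval b (pderiv i (facePoly w (specialize τ P))))) := by
  rw [facePoly_eq_weightedHomogeneousComponent, hd, ← specialize_weightedHomogeneousComponent,
    ← specialize_pderiv_succ, eval_specialize, ← hD]
  exact hx.tendsto_eval_pderiv i.succ (by simpa [hD] using hP)

end HasLeadingTerms

end LeadingTerms

section Projection

variable {m : ℕ}

theorem norm_projOf_sub_le (K : Submodule ℂ (EuclideanSpace ℂ (Fin m)))
    (v : EuclideanSpace ℂ (Fin m)) {z : EuclideanSpace ℂ (Fin m)} (hz : z ∈ K) :
    ‖projOf K v - v‖ ≤ ‖v - z‖ := by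
  rw [norm_sub_rev, show projOf K v = K.starProjection v from rfl,
    Submodule.starProjection_minimal]
  exact ciInf_le ⟨0, Set.forall_mem_range.mpr fun _ => norm_nonneg _⟩ (⟨z, hz⟩ : K)

theorem mem_dKer_iff {P : MvPolynomial (Fin m) ℂ} {p z : EuclideanSpace ℂ (Fin m)} :
    z ∈ dKer P p ↔ ∑ j, dvec P p j * z j = 0 := by
  simp [dKer]

theorem norm_projOf_dKer_sub_le (P : MvPolynomial (Fin m) ℂ) (p v : EuclideanSpace ℂ (Fin m))
    {j₀ : Fin m} (h : dvec P p j₀ ≠ 0) :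
    ‖projOf (dKer P p) v - v‖ ≤ ‖(∑ j, dvec P p j * v j) / dvec P p j₀‖ := by
  set r := (∑ j, dvec P p j * v j) / dvec P p j₀
  have hz : v - r • EuclideanSpace.single j₀ 1 ∈ dKer P p := by
    rw [mem_dKer_iff]
    simp [mul_sub, Finset.sum_sub_distrib, PiLp.single_apply, r, mul_div_cancel₀ _ h]
  calc ‖projOf (dKer P p) v - v‖ ≤ ‖v - (v - r • EuclideanSpace.single j₀ 1)‖ :=
        norm_projOf_sub_le _ v hz
    _ = ‖r‖ := by simp [norm_smul]

theorem mem_of_tendsto_projOf {α : Type*} {l : Filter α} [l.NeBot]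
    {K : α → Submodule ℂ (EuclideanSpace ℂ (Fin m))} {T : Submodule ℂ (EuclideanSpace ℂ (Fin m))}
    (hT : TendstoSubspaces l K T) {v : EuclideanSpace ℂ (Fin m)}
    (hv : Tendsto (fun x => projOf (K x) v) l (𝓝 v)) : v ∈ T := by
  have hTv : projOf T v = v :=
    tendsto_nhds_unique (((ContinuousLinearMap.apply ℂ _ v).continuous.tendsto _).comp hT) hv
  rw [← hTv]
  exact (T.orthogonalProjectionOnto v).2

theorem mem_of_tendstoSubspaces_dKer {α : Type*} {l : Filter α} [l.NeBot]
    {P : MvPolynomial (Fin m) ℂ} {p : α → EuclideanSpace ℂ (Fin m)}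
    {T : Submodule ℂ (EuclideanSpace ℂ (Fin m))} (hT : TendstoSubspaces l (fun x => dKer P (p x)) T)
    {v : EuclideanSpace ℂ (Fin m)} {j₀ : Fin m} {μ : α → ℂ} {A : ℂ} (hA : A ≠ 0)
    (hden : Tendsto (fun x => μ x * dvec P (p x) j₀) l (𝓝 A))
    (hnum : Tendsto (fun x => μ x * ∑ j, dvec P (p x) j * v j) l (𝓝 0)) : v ∈ T := by
  refine mem_of_tendsto_projOf hT (tendsto_iff_norm_sub_tendsto_zero.mpr ?_)
  have hquot := (hnum.div hden hA).norm
  rw [zero_div, norm_zero] at hquot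
  refine squeeze_zero' (Eventually.of_forall fun _ => norm_nonneg _) ?_ hquot
  filter_upwards [hden.eventually_ne hA] with x hx
  rw [Pi.div_apply, mul_div_mul_left _ _ (left_ne_zero_of_mul hx)]
  exact norm_projOf_dKer_sub_le P (p x) v (right_ne_zero_of_mul hx)

end Projection

theorem leadingForm_apply_eq_zero {m : ℕ} {ι : Type*} {ρ : ℝ → EuclideanSpace ℂ (Fin m)}
    {V : Fin m → ℕ} {a : Fin m → ℂ} (hx : HasLeadingTerms (fun s => pt (ρ s)) V a)
    {P : ι → MvPolynomial (Fin m) ℂ} {d ν : ℕ} (hP : ∀ l, ∀ β ∈ (P l).support, d ≤ weight V β)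
    (hν : ν < d) {j : Fin m} (hj : V j = 0) {k : ι} {S : Finset ι} {c : ι → Polynomial ℂ}
    {ω : Fin m → ℂ}
    (hω : Tendsto (fun s : ℝ => ((s : ℂ) ^ ν)⁻¹ •
        (dvec (P k) (ρ s) + ∑ l ∈ S, Polynomial.eval (s : ℂ) (c l) • dvec (P l) (ρ s)))
      (𝓝[>] 0) (𝓝 ω)) :
    ω j = 0 := by
  have h0 : ∀ l, Tendsto (fun s : ℝ => ((s : ℂ) ^ ν)⁻¹ * dvec (P l) (ρ s) j) (𝓝[>] 0) (𝓝 0) :=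
    fun l => hx.tendsto_eval_pderiv_of_weight_eq_zero (hP l) hν hj
  have hc : ∀ l, Tendsto (fun s : ℝ => Polynomial.eval (s : ℂ) (c l)) (𝓝[>] 0)
      (𝓝 ((c l).eval 0)) := fun l =>
    (((c l).continuous.comp Complex.continuous_ofReal).tendsto' 0 _ (by simp)).mono_left
      nhdsWithin_le_nhds
  have hlim := (h0 k).add (tendsto_finsetSum S fun l _ => (hc l).mul (h0 l))
  simp only [mul_zero, Finset.sum_const_zero, add_zero] at hlim
  refine tendsto_nhds_unique (((continuous_apply j).tendsto ω).comp hω) (hlim.congr fun s => ?_)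
  simp [Finset.mul_sum, mul_left_comm]

theorem IsTameRadius.exists_pderiv_facePoly_ne_zero {n : ℕ} {R : ℝ} {g : MvPolynomial (Fin n) ℂ}
    (htame : IsTameRadius R fun _ : Fin 1 => g) {I : Finset (Fin n)} (hI : I.Nonempty)
    (hg : VanishesOn g I) {w : Fin n → ℕ} (hw : w ≠ 0) (hwI : ∀ i, w i = 0 ↔ i ∈ I)
    {z : Fin n → ℂ} (hz : ∀ i, z i ≠ 0) (hzR : ∑ i ∈ I, ‖z i‖ ^ 2 < R)
    (hface : eval z (facePoly w g) = 0) : ∃ i ∉ I, eval z (pderiv i (facePoly w g)) ≠ 0 := by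
  have hli := htame I hI (fun _ => hg) w hw hwI z hz hzR fun _ => hface
  by_contra! h
  exact hli.ne_zero 0 (funext fun i => h i.1 i.2)

theorem apply_succ_eq_zero_of_mem_axisCI {n nI : ℕ} {v : EuclideanSpace ℂ (Fin (n + 1))}
    (hv : v ∈ axisCI n nI) {i : Fin n} (hi : nI ≤ i) : v i.succ = 0 := by
  simp only [axisCI, Submodule.mem_iInf] at hv
  simpa using hv i hi

theorem tendsto_rescaled_differential_apply_of_mem_axisCI {n nI d : ℕ}
    {ρ : ℝ → EuclideanSpace ℂ (Fin (n + 1))} {w : Fin n → ℕ} {τ : ℂ} {b : Fin n → ℂ}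
    {P : MvPolynomial (Fin (n + 1)) ℂ}
    (hx : HasLeadingTerms (fun s => pt (ρ s)) (Fin.cons 0 w) (Fin.cons τ b))
    (hw : ∀ i : Fin n, w i = 0 ↔ (i : ℕ) < nI)
    (hP : ∀ β ∈ P.support, d ≤ weight (Fin.cons 0 w : Fin (n + 1) → ℕ) β) {D : ℕ} (hD : D < d)
    {v : EuclideanSpace ℂ (Fin (n + 1))} (hv : v ∈ axisCI n nI) :
    Tendsto (fun s : ℝ => ((s : ℂ) ^ D)⁻¹ * ∑ j, dvec P (ρ s) j * v j) (𝓝[>] 0) (𝓝 0) := by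
  have hvj : ∀ j, (Fin.cons 0 w : Fin (n + 1) → ℕ) j ≠ 0 → v j = 0 := by
    refine Fin.cases (fun h => absurd rfl h) (fun i hi => apply_succ_eq_zero_of_mem_axisCI hv ?_)
    simpa [hw] using hi
  have hterm : ∀ j, Tendsto (fun s : ℝ => ((s : ℂ) ^ D)⁻¹ * dvec P (ρ s) j * v j)
      (𝓝[>] 0) (𝓝 0) := by
    intro j
    by_cases hwj : (Fin.cons 0 w : Fin (n + 1) → ℕ) j = 0
    · simpa only [zero_mul, dvec] using
        (hx.tendsto_eval_pderiv_of_weight_eq_zero hP hD hwj).mul_const (v j)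
    · simp [hvj j hwj]
  simpa only [Finset.mul_sum, mul_assoc, Finset.sum_const_zero] using
    tendsto_finsetSum Finset.univ fun j _ => hterm j

theorem axisCI_le_of_tendstoSubspaces_dKer {n nI d : ℕ} {R ε : ℝ}
    {ρ : ℝ → EuclideanSpace ℂ (Fin (n + 1))} {w : Fin n → ℕ} {τ : ℂ} {b : Fin n → ℂ}
    {P : MvPolynomial (Fin (n + 1)) ℂ} (hnI : 0 < nI) (hnIn : nI < n)
    (hw : ∀ i : Fin n, w i = 0 ↔ (i : ℕ) < nI) (hb : ∀ i, b i ≠ 0)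
    (hbR : ∑ i ∈ Finset.univ.filter fun i : Fin n => (i : ℕ) < nI, ‖b i‖ ^ 2 < R)
    (htame : IsTameRadius R fun _ : Fin 1 => specialize τ P)
    (hvan : VanishesOn (specialize τ P) {i | (i : ℕ) < nI})
    (hx : HasLeadingTerms (fun s => pt (ρ s)) (Fin.cons 0 w) (Fin.cons τ b))
    (hP : ∀ β ∈ P.support, d ≤ weight (Fin.cons 0 w : Fin (n + 1) → ℕ) β)
    (hd : dmin w (specialize τ P) = d) (hPρ : ∀ s ∈ Set.Ioo 0 ε, eval (pt (ρ s)) P = 0)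
    {sm : ℕ → ℝ} (hsm : ∀ m, sm m ∈ Set.Ioo 0 ε) (hsm0 : Tendsto sm atTop (𝓝 0))
    {T : Submodule ℂ (EuclideanSpace ℂ (Fin (n + 1)))}
    (hT : TendstoSubspaces atTop (fun m => dKer P (ρ (sm m))) T) : axisCI n nI ≤ T := by
  have hface : eval b (facePoly w (specialize τ P)) = 0 := by
    refine tendsto_nhds_unique (hx.tendsto_eval_facePoly hP hd) (tendsto_const_nhds.congr' ?_)
    filter_upwards [Ioo_mem_nhdsGT (show (0 : ℝ) < ε from (hsm 0).1.trans (hsm 0).2)] with s hs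
    rw [hPρ s hs, mul_zero]
  obtain ⟨i₀, hi₀, hA⟩ := htame.exists_pderiv_facePoly_ne_zero
    (I := Finset.univ.filter fun i : Fin n => (i : ℕ) < nI) ⟨⟨0, by omega⟩, by simpa⟩
    (by simpa using hvan) (fun h => by simpa [h] using hw ⟨nI, hnIn⟩) (by simpa using hw) hb hbR
    hface
  have hwi₀ : w i₀ ≤ d := by
    by_contra! h
    rw [facePoly_eq_weightedHomogeneousComponent, hd,
      pderiv_weightedHomogeneousComponent_eq_zero h] at hA
    simp at hA
  have hwi₀_pos : 0 < w i₀ := Nat.pos_of_ne_zero (by simpa [hw] using hi₀)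
  have hsm' : Tendsto sm atTop (𝓝[>] 0) :=
    tendsto_nhdsWithin_of_tendsto_nhds_of_eventually_within _ hsm0
      (Eventually.of_forall fun m => (hsm m).1)
  intro v hv
  exact mem_of_tendstoSubspaces_dKer hT (j₀ := i₀.succ) hA
    ((hx.tendsto_eval_pderiv_facePoly hP hd (Nat.sub_add_cancel hwi₀)).comp hsm')
    ((tendsto_rescaled_differential_apply_of_mem_axisCI hx hw hP (by omega) hv).comp hsm')

theorem sum_norm_sq_le_of_eq_apply_succ {n : ℕ} {p : EuclideanSpace ℂ (Fin (n + 1))}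
    {I : Finset (Fin n)} {b : Fin n → ℂ} (hb : ∀ i ∈ I, b i = p i.succ) :
    ∑ i ∈ I, ‖b i‖ ^ 2 ≤ ‖p‖ ^ 2 := by
  rw [EuclideanSpace.norm_sq_eq, Fin.sum_univ_succ, Finset.sum_congr rfl fun i hi => by
    rw [hb i hi]]
  have := Finset.sum_le_sum_of_subset_of_nonneg I.subset_univ
    fun i _ _ => sq_nonneg ‖p i.succ‖
  linarith [sq_nonneg ‖p 0‖]

theorem leading_forms_vanish_on_axis_general (n k₀ nI kL kL' : ℕ)
    (F : Fin k₀ → MvPolynomial (Fin (n + 1)) ℂ)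
    (hadm : NewtonAdmissible F) :
    ∃ ε₀ > (0 : ℝ),
      ∀ (hnI : 0 < nI) (hnIn : nI < n) (hkL' : kL' ≤ kL) (hkL : kL ≤ k₀)
        (K : Set (Fin k₀)), (∀ k : Fin k₀, (k : ℕ) < kL → k ∈ K) →
      ∀ p₀ : EuclideanSpace ℂ (Fin (n + 1)), ‖p₀‖ < ε₀ →
        p₀ ∈ stratum F {i : Fin n | (i : ℕ) < nI} K →
        p₀ ∈ closure (stratum F Set.univ {k : Fin k₀ | (k : ℕ) < kL}) →
      ∀ (ρ : ℝ → EuclideanSpace ℂ (Fin (n + 1))) (ε : ℝ), 0 < ε →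
        AnalyticAt ℝ ρ 0 → ρ 0 = p₀ →
        (∀ s ∈ Set.Ioo (0 : ℝ) ε,
          ρ s ∈ stratum F Set.univ {k : Fin k₀ | (k : ℕ) < kL}) →
      ∀ (W : Fin (n + 1) → ℕ) (a : Fin (n + 1) → ℂ),
        (∀ j, a j ≠ 0) →
        (∀ j, Tendsto (fun s : ℝ => ((s : ℂ) ^ W j)⁻¹ * pt (ρ s) j)
          (𝓝[>] 0) (𝓝 (a j))) →
        (∀ i : Fin n, W i.succ = 0 ↔ (i : ℕ) < nI) →
        (∀ i i' : Fin n, i ≤ i' → W i.succ ≤ W i'.succ) →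
        (∀ i : Fin n, (i : ℕ) < nI → a i.succ = pt p₀ i.succ) →
      ∀ d : ℕ,
        (∀ k : Fin k₀, (k : ℕ) < kL' →
          dmin (fun i => W i.succ) (specialize (pt p₀ 0) (F k)) = d) →
        (∀ k : Fin k₀, (k : ℕ) < kL →
          ((k : ℕ) < kL' ↔
            VanishesOn (specialize (pt p₀ 0) (F k)) {i : Fin n | (i : ℕ) < nI})) →
      ∀ (σ : Equiv.Perm (Fin kL')) (c : Fin kL' → Fin kL' → Polynomial ℂ)
        (ν : Fin kL' → ℕ) (ω : Fin kL' → (Fin (n + 1) → ℂ)),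
        Monotone ν →
        (∀ k, (ν k : ℤ) ≤ (d : ℤ) - (W (Fin.succ ⟨nI, hnIn⟩) : ℤ)) →
        (∀ k, ω k ≠ 0) →
        (∀ k : Fin kL',
          Tendsto (fun s : ℝ =>
              ((s : ℂ) ^ ν k)⁻¹ •
                (dvec (F (castIdx (le_trans hkL' hkL) (σ k))) (ρ s) +
                  ∑ l ∈ Finset.univ.filter (fun l : Fin kL' => l < k),
                    Polynomial.eval (s : ℂ) (c k l) •
                      dvec (F (castIdx (le_trans hkL' hkL) (σ l))) (ρ s)))
            (𝓝[>] 0) (𝓝 (ω k))) →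
        (∀ k : Fin kL',
          ω k 0 = 0 ∧ ∀ i : Fin n, (i : ℕ) < nI → ω k i.succ = 0) ∧
        ∀ (k : Fin kL') (T : Submodule ℂ (EuclideanSpace ℂ (Fin (n + 1))))
          (sm : ℕ → ℝ),
          (∀ m, sm m ∈ Set.Ioo (0 : ℝ) ε) → Tendsto sm atTop (𝓝 0) →
          TendstoSubspaces atTop
            (fun m => dKer (F (castIdx (le_trans hkL' hkL) k)) (ρ (sm m))) T →
          axisCI n nI ≤ T := by
  obtain ⟨R, hR, r, hr, hadm⟩ := hadm
  refine ⟨min r (Real.sqrt R), lt_min hr (Real.sqrt_pos.mpr hR), ?_⟩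
  intro hnI hnIn hkL' hkL _ _ p₀ hp₀ _ _ ρ ε _ hρ hρ0 hρS W a ha htends hW _ ha₀ d hd hvan σ c ν ω
    _ hν _ hωt
  have hτ : ‖pt p₀ 0‖ < r := (PiLp.norm_apply_le p₀ 0).trans_lt (hp₀.trans_le (min_le_left _ _))
  have hP : ∀ k : Fin k₀, (k : ℕ) < kL' → ∀ β ∈ (F k).support,
      d ≤ weight (Fin.cons 0 fun i => W i.succ : Fin (n + 1) → ℕ) β := fun k hk β hβ => by
    rw [← hd k hk, dmin_eq_of_newtonBoundary_eq ((hadm _ hτ).1 k)]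
    exact dmin_specialize_zero_le_weight hr (fun t ht => (hadm t ht).1 k) _ hβ
  have hx : HasLeadingTerms (fun s => pt (ρ s)) (Fin.cons 0 fun i => W i.succ)
      (Fin.cons (pt p₀ 0) fun i => a i.succ) :=
    HasLeadingTerms.cons_zero htends <| hρ0 ▸ ((PiLp.continuous_apply 2 _ 0).tendsto _).comp
      (hρ.continuousAt.mono_left nhdsWithin_le_nhds)
  have hνd : ∀ k, ν k < d := fun k => by
    have := hν k
    have := Nat.pos_of_ne_zero fun h => by simpa using (hW ⟨nI, hnIn⟩).mp h
    omega
  have hPσ := fun l => hP (castIdx (le_trans hkL' hkL) (σ l)) (σ l).isLt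
  refine ⟨fun k => ⟨leadingForm_apply_eq_zero hx hPσ (hνd k) rfl (hωt k), fun i hi =>
    leadingForm_apply_eq_zero hx hPσ (hνd k) (by simpa using (hW i).mpr hi) (hωt k)⟩,
    fun k T sm hsm hsm0 hT => ?_⟩
  obtain ⟨-, R', hRR', htame⟩ := (hadm _ hτ).2 1 (fun _ => castIdx (le_trans hkL' hkL) k)
    fun _ _ _ => Subsingleton.elim _ _
  refine axisCI_le_of_tendstoSubspaces_dKer hnI hnIn hW (fun i => ha i.succ) ?_ htame
    ((hvan _ (k.isLt.trans_le hkL')).mp k.isLt) hx (hP _ k.isLt) (hd _ k.isLt)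
    (fun s hs => ((hρS s hs).2 _).mpr (k.isLt.trans_le hkL')) hsm hsm0 hT
  exact ((sum_norm_sq_le_of_eq_apply_succ fun i hi => ha₀ i (Finset.mem_filter.mp hi).2).trans_lt
    ((Real.lt_sqrt (norm_nonneg _)).mp (hp₀.trans_le (min_le_right _ _)))).trans hRR'

/-- §7.5, including Remark `remcrucial`, of Eyral–Oka. The leading forms
`ω_k`, `k ≤ k_{L'}`, produced by Lemma `lemma-fundlil` vanish identically on `ℂ × ℂ^I`;
consequently every limit of the tangent hyperplanes `ker df^k(ρ(s))` contains `ℂ × ℂ^I`. -/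
theorem leading_forms_vanish_on_axis (n k₀ nI kL kL' : ℕ)
    (F : Fin k₀ → MvPolynomial (Fin (n + 1)) ℂ)
    (hconst : ∀ k, (F k).totalDegree ≠ 0)
    (hzero : ∀ (k : Fin k₀) (t : ℂ), eval (Fin.cases t fun _ => (0 : ℂ)) (F k) = 0)
    (hadm : NewtonAdmissible F) :
    ∃ ε₀ > (0 : ℝ),
      ∀ (hnI : 0 < nI) (hnIn : nI < n) (hkL' : kL' ≤ kL) (hkL : kL ≤ k₀)
        (K : Set (Fin k₀)), (∀ k : Fin k₀, (k : ℕ) < kL → k ∈ K) →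
      ∀ p₀ : EuclideanSpace ℂ (Fin (n + 1)), ‖p₀‖ < ε₀ →
        p₀ ∈ stratum F {i : Fin n | (i : ℕ) < nI} K →
        p₀ ∈ closure (stratum F Set.univ {k : Fin k₀ | (k : ℕ) < kL}) →
      ∀ (ρ : ℝ → EuclideanSpace ℂ (Fin (n + 1))) (ε : ℝ), 0 < ε →
        AnalyticAt ℝ ρ 0 → ρ 0 = p₀ →
        (∀ s ∈ Set.Ioo (0 : ℝ) ε,
          ρ s ∈ stratum F Set.univ {k : Fin k₀ | (k : ℕ) < kL}) →
      ∀ (W : Fin (n + 1) → ℕ) (a : Fin (n + 1) → ℂ),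
        (∀ j, a j ≠ 0) →
        (∀ j, Tendsto (fun s : ℝ => ((s : ℂ) ^ W j)⁻¹ * pt (ρ s) j)
          (𝓝[>] 0) (𝓝 (a j))) →
        (∀ i : Fin n, W i.succ = 0 ↔ (i : ℕ) < nI) →
        (∀ i i' : Fin n, i ≤ i' → W i.succ ≤ W i'.succ) →
        (∀ i : Fin n, (i : ℕ) < nI → a i.succ = pt p₀ i.succ) →
      ∀ d : ℕ,
        (∀ k : Fin k₀, (k : ℕ) < kL' →
          dmin (fun i => W i.succ) (specialize (pt p₀ 0) (F k)) = d) →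
        (∀ k : Fin k₀, (k : ℕ) < kL →
          ((k : ℕ) < kL' ↔
            VanishesOn (specialize (pt p₀ 0) (F k)) {i : Fin n | (i : ℕ) < nI})) →
      ∀ (σ : Equiv.Perm (Fin kL')) (c : Fin kL' → Fin kL' → Polynomial ℂ)
        (ν : Fin kL' → ℕ) (ω : Fin kL' → (Fin (n + 1) → ℂ)),
        Monotone ν →
        (∀ k, (ν k : ℤ) ≤ (d : ℤ) - (W (Fin.succ ⟨nI, hnIn⟩) : ℤ)) →
        (∀ k, ω k ≠ 0) →
        (∀ k : Fin kL',
          Tendsto (fun s : ℝ =>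
              ((s : ℂ) ^ ν k)⁻¹ •
                (dvec (F (castIdx (le_trans hkL' hkL) (σ k))) (ρ s) +
                  ∑ l ∈ Finset.univ.filter (fun l : Fin kL' => l < k),
                    Polynomial.eval (s : ℂ) (c k l) •
                      dvec (F (castIdx (le_trans hkL' hkL) (σ l))) (ρ s)))
            (𝓝[>] 0) (𝓝 (ω k))) →
        (∀ k : Fin kL',
          ω k 0 = 0 ∧ ∀ i : Fin n, (i : ℕ) < nI → ω k i.succ = 0) ∧
        ∀ (k : Fin kL') (T : Submodule ℂ (EuclideanSpace ℂ (Fin (n + 1))))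
          (sm : ℕ → ℝ),
          (∀ m, sm m ∈ Set.Ioo (0 : ℝ) ε) → Tendsto sm atTop (𝓝 0) →
          TendstoSubspaces atTop
            (fun m => dKer (F (castIdx (le_trans hkL' hkL) k)) (ρ (sm m))) T →
          axisCI n nI ≤ T :=
  leading_forms_vanish_on_axis_general n k₀ nI kL kL' F hadm

end NewtonPaper
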